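/- arXiv:2502.13225 — 2 statements merged into one kernel-verified Lean document; each statement's English description precedes it below -/
import Mathlib

section
/- For q ≥ 1 and jointly distributed finite-valued random variables X₁,...,Xₙ, the joint Tsallis entropy is bounded above by the sum of the marginal Tsallis entropies: Hᵀ_q(X₁,...,Xₙ) ≤ ∑ᵢ Hᵀ_q(Xᵢ). -/
/-!
Tsallis entropy is invariant under relabelling, so splitting off the first coordinate with
`Fin.consEquiv` reduces the statement, by induction on `n`, to subadditivity for a pair `(X, Y)`
with joint law `p` and marginals `pX`, `pY`.

For `q = 1` this is Gibbs' inequality `∑ p log (pX pY / p) ≤ ∑ pX pY - ∑ p = 0`.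

For `q > 1` it reads `∑ pX^q + ∑ pY^q ≤ 1 + ∑ p^q`. Write `p(a,b) = pX(a) c(a,b)` with `c(a, ·)`
the conditional law of `Y` given `X = a`, and `S(a) = ∑_b c(a,b)^q ≤ 1`. Then `∑ p^q = ∑ pX^q S`,
Jensen for `t ↦ t^q` gives `∑ pY^q ≤ ∑ pX S`, and `(pX - pX^q)(1 - S) ≥ 0` closes the gap.
-/

/-- Tsallis entropy of order `q` of a probability mass function on a finite set
(Shannon entropy for `q = 1`). -/
noncomputable def tsallisPMF (q : ℝ) {S : Type*} [Fintype S] (p : S → ℝ) : ℝ :=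
  if q = 1 then -∑ x, p x * Real.log (p x) else ((∑ x, p x ^ q) - 1) / (1 - q)

open Finset Real

theorem mul_log_sub_log_le_sub {x y : ℝ} (hx : 0 ≤ x) (hy : 0 ≤ y) (hxy : y = 0 → x = 0) :
    x * (log y - log x) ≤ y - x := by
  rcases hx.eq_or_lt with rfl | hx
  · simpa using hy
  have hy : 0 < y := hy.lt_of_ne fun h => hx.ne' (hxy h.symm)
  calc x * (log y - log x) = x * log (y / x) := by rw [log_div hy.ne' hx.ne']
    _ ≤ x * (y / x - 1) := by gcongr; exact log_le_sub_one_of_pos (div_pos hy hx)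
    _ = y - x := by field_simp

theorem sum_mul_log_sub_log_le {ι : Type*} (s : Finset ι) {p r : ι → ℝ}
    (hp : ∀ i ∈ s, 0 ≤ p i) (hr : ∀ i ∈ s, 0 ≤ r i) (hpr : ∀ i ∈ s, r i = 0 → p i = 0) :
    ∑ i ∈ s, p i * (log (r i) - log (p i)) ≤ ∑ i ∈ s, r i - ∑ i ∈ s, p i := by
  rw [← sum_sub_distrib]
  exact sum_le_sum fun i hi => mul_log_sub_log_le_sub (hp i hi) (hr i hi) (hpr i hi)

section Tsallis

variable {S : Type*} [Fintype S]

theorem tsallisPMF_one (p : S → ℝ) : tsallisPMF 1 p = -∑ x, p x * log (p x) :=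
  if_pos rfl

theorem tsallisPMF_of_ne_one {q : ℝ} (hq : q ≠ 1) (p : S → ℝ) :
    tsallisPMF q p = ((∑ x, p x ^ q) - 1) / (1 - q) :=
  if_neg hq

theorem tsallisPMF_comp_equiv {T : Type*} [Fintype T] {q : ℝ} (e : S ≃ T) (p : T → ℝ) :
    tsallisPMF q (p ∘ e) = tsallisPMF q p := by
  simp only [tsallisPMF, Function.comp_apply, e.sum_comp fun t => p t ^ q,
    e.sum_comp fun t => p t * log (p t)]

theorem tsallisPMF_eq_zero_of_unique [Unique S] {p : S → ℝ} (hsum : ∑ x, p x = 1) {q : ℝ} :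
    tsallisPMF q p = 0 := by
  rw [Fintype.sum_unique] at hsum
  simp [tsallisPMF, hsum]

end Tsallis

noncomputable def pushforward {α β : Type*} [Fintype α] [DecidableEq β] (f : α → β)
    (p : α → ℝ) (b : β) : ℝ :=
  ∑ a, if f a = b then p a else 0

section Pushforward

variable {α α' β γ : Type*} [Fintype α] [Fintype α'] [DecidableEq β] [DecidableEq γ]

theorem pushforward_nonneg {p : α → ℝ} (hp : ∀ a, 0 ≤ p a) (f : α → β) (b : β) :
    0 ≤ pushforward f p b :=
  sum_nonneg fun a _ => ite_nonneg (hp a) le_rfl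

theorem sum_pushforward [Fintype β] (f : α → β) (p : α → ℝ) :
    ∑ b, pushforward f p b = ∑ a, p a := by
  unfold pushforward
  rw [sum_comm]
  simp

theorem pushforward_pushforward [Fintype β] (f : α → β) (g : β → γ) (p : α → ℝ) :
    pushforward g (pushforward f p) = pushforward (g ∘ f) p := by
  funext c
  simp_rw [pushforward, ite_sum_zero]
  rw [sum_comm]
  refine sum_congr rfl fun a _ => ?_
  rw [sum_eq_single (f a) (fun b _ hb => by simp [Ne.symm hb]) (by simp)]
  simp

theorem pushforward_comp_equiv (e : α' ≃ α) (f : α → β) (p : α → ℝ) :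
    pushforward (f ∘ e) (p ∘ e) = pushforward f p :=
  funext fun b => Equiv.sum_comp e fun a => if f a = b then p a else 0

theorem pushforward_fst [Fintype β] (p : β × α → ℝ) :
    pushforward Prod.fst p = fun b => ∑ a, p (b, a) := by
  funext b
  rw [pushforward, Fintype.sum_prod_type, sum_eq_single b (fun x _ hx => by simp [hx]) (by simp)]
  simp

theorem pushforward_snd [Fintype β] (p : α × β → ℝ) :
    pushforward Prod.snd p = fun b => ∑ a, p (a, b) := by
  funext b
  rw [pushforward, Fintype.sum_prod_type_right,
    sum_eq_single b (fun x _ hx => by simp [hx]) (by simp)]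
  simp

end Pushforward

theorem sum_mul_div_sum {ι : Type*} [Fintype ι] {f : ι → ℝ} (hf : ∀ i, 0 ≤ f i) (i : ι) :
    (∑ j, f j) * (f i / ∑ j, f j) = f i := by
  by_cases h : ∑ j, f j = 0
  · simp [h, (sum_eq_zero_iff_of_nonneg fun j _ => hf j).1 h i (mem_univ i)]
  · exact mul_div_cancel₀ _ h

theorem sum_rpow_div_sum_le_one {ι : Type*} [Fintype ι] {f : ι → ℝ} (hf : ∀ i, 0 ≤ f i) {q : ℝ}
    (hq : 1 ≤ q) : ∑ i, (f i / ∑ j, f j) ^ q ≤ 1 :=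
  calc ∑ i, (f i / ∑ j, f j) ^ q ≤ ∑ i, f i / ∑ j, f j :=
        sum_le_sum fun i _ => rpow_le_self_of_le_one
          (div_nonneg (hf i) (sum_nonneg fun j _ => hf j))
          (div_le_one_of_le₀ (single_le_sum (fun j _ => hf j) (mem_univ i))
            (sum_nonneg fun j _ => hf j)) hq
    _ = (∑ i, f i) / ∑ j, f j := by rw [sum_div]
    _ ≤ 1 := div_self_le_one _

section Prod

variable {α β : Type*}

theorem le_sum_fst [Fintype β] {p : α × β → ℝ} (hp : ∀ z, 0 ≤ p z) (a : α) (b : β) :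
    p (a, b) ≤ ∑ b', p (a, b') :=
  single_le_sum (f := fun b' => p (a, b')) (fun _ _ => hp _) (mem_univ b)

theorem le_sum_snd [Fintype α] {p : α × β → ℝ} (hp : ∀ z, 0 ≤ p z) (a : α) (b : β) :
    p (a, b) ≤ ∑ a', p (a', b) :=
  single_le_sum (f := fun a' => p (a', b)) (fun _ _ => hp _) (mem_univ a)

theorem tsallisPMF_one_le_add_marginals [Fintype α] [Fintype β] {p : α × β → ℝ} (hp : ∀ z, 0 ≤ p z)
    (hsum : ∑ z, p z = 1) :
    tsallisPMF 1 p
      ≤ tsallisPMF 1 (fun a => ∑ b, p (a, b)) + tsallisPMF 1 (fun b => ∑ a, p (a, b)) := by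
  set pX : α → ℝ := fun a => ∑ b, p (a, b)
  set pY : β → ℝ := fun b => ∑ a, p (a, b)
  have hpX : ∀ a, 0 ≤ pX a := fun a => sum_nonneg fun b _ => hp (a, b)
  have hpY : ∀ b, 0 ≤ pY b := fun b => sum_nonneg fun a _ => hp (a, b)
  have hsum_prod : ∑ z : α × β, pX z.1 * pY z.2 = 1 := by
    have hX : ∑ a, pX a = 1 := by rw [← hsum, Fintype.sum_prod_type]
    have hY : ∑ b, pY b = 1 := by rw [← hsum, Fintype.sum_prod_type_right]
    rw [Fintype.sum_prod_type, ← Fintype.sum_mul_sum, hX, hY, one_mul]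
  have gibbs := sum_mul_log_sub_log_le univ (r := fun z => pX z.1 * pY z.2)
    (fun z _ => hp z) (fun z _ => mul_nonneg (hpX z.1) (hpY z.2)) fun ⟨a, b⟩ _ hr => by
      rcases mul_eq_zero.1 hr with h | h
      · exact le_antisymm (h ▸ le_sum_fst hp a b) (hp _)
      · exact le_antisymm (h ▸ le_sum_snd hp a b) (hp _)
  have hX : ∑ a, pX a * log (pX a) = ∑ z : α × β, p z * log (pX z.1) := by
    rw [Fintype.sum_prod_type]
    simp only [pX, sum_mul]
  have hY : ∑ b, pY b * log (pY b) = ∑ z : α × β, p z * log (pY z.2) := by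
    rw [Fintype.sum_prod_type_right]
    simp only [pY, sum_mul]
  have hsplit : ∑ z : α × β, p z * (log (pX z.1 * pY z.2) - log (p z))
      = ∑ a, pX a * log (pX a) + ∑ b, pY b * log (pY b) - ∑ z, p z * log (p z) := by
    have hlog_mul : ∀ z : α × β,
        p z * log (pX z.1 * pY z.2) = p z * log (pX z.1) + p z * log (pY z.2) := by
      rintro ⟨a, b⟩
      rcases (hp (a, b)).eq_or_lt with h | h
      · simp [← h]
      · rw [log_mul (h.trans_le (le_sum_fst hp a b)).ne' (h.trans_le (le_sum_snd hp a b)).ne',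
          mul_add]
    simp only [mul_sub, hlog_mul, sum_sub_distrib, sum_add_distrib, hX, hY]
  simp only [tsallisPMF_one]
  rw [hsplit, hsum_prod, hsum] at gibbs
  linarith

theorem sum_rpow_marginals_le [Fintype α] [Fintype β] {p : α × β → ℝ} (hp : ∀ z, 0 ≤ p z)
    (hsum : ∑ z, p z = 1) {q : ℝ} (hq : 1 ≤ q) :
    ∑ a, (∑ b, p (a, b)) ^ q + ∑ b, (∑ a, p (a, b)) ^ q ≤ 1 + ∑ z, p z ^ q := by
  set pX : α → ℝ := fun a => ∑ b, p (a, b)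
  set pY : β → ℝ := fun b => ∑ a, p (a, b)
  -- Where `pX a = 0` the row of `p` vanishes too, so the junk value `c a b = 0` is harmless.
  set c : α → β → ℝ := fun a b => p (a, b) / pX a
  set S : α → ℝ := fun a => ∑ b, c a b ^ q
  have hpX : ∀ a, 0 ≤ pX a := fun a => sum_nonneg fun b _ => hp (a, b)
  have hc : ∀ a b, 0 ≤ c a b := fun a b => div_nonneg (hp (a, b)) (hpX a)
  have hX : ∑ a, pX a = 1 := by rw [← hsum, Fintype.sum_prod_type]
  have hpX_le : ∀ a, pX a ≤ 1 := fun a => hX ▸ single_le_sum (fun a _ => hpX a) (mem_univ a)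
  have hrow : ∀ a b, pX a * c a b = p (a, b) := fun a => sum_mul_div_sum fun b => hp (a, b)
  have hS : ∀ a, S a ≤ 1 := fun a => sum_rpow_div_sum_le_one (fun b => hp (a, b)) hq
  have hjoint : ∑ z, p z ^ q = ∑ a, pX a ^ q * S a := by
    rw [Fintype.sum_prod_type]
    simp only [S, mul_sum, ← mul_rpow (hpX _) (hc _ _), hrow]
  have hjensen : ∀ b, pY b ^ q ≤ ∑ a, pX a * c a b ^ q := by
    intro b
    have hmix : pY b = ∑ a, pX a * c a b := sum_congr rfl fun a _ => (hrow a b).symm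
    rw [hmix]
    exact rpow_arith_mean_le_arith_mean_rpow univ pX (c · b) (fun a _ => hpX a) hX
      (fun a _ => hc a b) hq
  calc ∑ a, pX a ^ q + ∑ b, pY b ^ q ≤ ∑ a, pX a ^ q + ∑ a, pX a * S a := by
        gcongr
        calc ∑ b, pY b ^ q ≤ ∑ b, ∑ a, pX a * c a b ^ q := sum_le_sum fun b _ => hjensen b
          _ = ∑ a, pX a * S a := by rw [sum_comm]; simp only [S, mul_sum]
    _ ≤ ∑ a, (pX a + pX a ^ q * S a) := by
        rw [← sum_add_distrib]
        refine sum_le_sum fun a _ => ?_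
        have := mul_nonneg (sub_nonneg.2 (rpow_le_self_of_le_one (hpX a) (hpX_le a) hq))
          (sub_nonneg.2 (hS a))
        linarith
    _ = 1 + ∑ z, p z ^ q := by rw [sum_add_distrib, hX, hjoint]

theorem tsallisPMF_le_add_marginals [Fintype α] [Fintype β] {p : α × β → ℝ}
    (hp : ∀ z, 0 ≤ p z) (hsum : ∑ z, p z = 1) {q : ℝ} (hq : 1 ≤ q) :
    tsallisPMF q p
      ≤ tsallisPMF q (fun a => ∑ b, p (a, b)) + tsallisPMF q (fun b => ∑ a, p (a, b)) := by
  rcases hq.eq_or_lt with rfl | hq'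
  · exact tsallisPMF_one_le_add_marginals hp hsum
  simp only [tsallisPMF_of_ne_one hq'.ne']
  rw [← add_div, div_le_div_right_of_neg (by linarith)]
  linarith [sum_rpow_marginals_le hp hsum hq]

theorem tsallisPMF_le_add_pushforward_fst_snd [Fintype α] [Fintype β] [DecidableEq α]
    [DecidableEq β] {p : α × β → ℝ} (hp : ∀ z, 0 ≤ p z) (hsum : ∑ z, p z = 1) {q : ℝ}
    (hq : 1 ≤ q) :
    tsallisPMF q p
      ≤ tsallisPMF q (pushforward Prod.fst p) + tsallisPMF q (pushforward Prod.snd p) := by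
  rw [pushforward_fst, pushforward_snd]
  exact tsallisPMF_le_add_marginals hp hsum hq

end Prod

section FinCons

variable {n : ℕ} {F : Fin (n + 1) → Type*} [∀ i, Fintype (F i)] [∀ i, DecidableEq (F i)]

theorem pushforward_fst_comp_consEquiv (p : (∀ i, F i) → ℝ) :
    pushforward Prod.fst (p ∘ Fin.consEquiv F) = pushforward (· 0) p := by
  rw [← pushforward_comp_equiv (Fin.consEquiv F)]
  rfl

theorem pushforward_snd_comp_consEquiv (p : (∀ i, F i) → ℝ) (i : Fin n) :
    pushforward (· i) (pushforward Prod.snd (p ∘ Fin.consEquiv F)) = pushforward (· i.succ) p := by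
  rw [pushforward_pushforward, ← pushforward_comp_equiv (Fin.consEquiv F)]
  rfl

end FinCons

/-- Subadditivity: for `q ≥ 1`, the joint Tsallis entropy is at most the sum of
the marginal Tsallis entropies. -/
theorem tsallis_joint_le_sum_marginals {n : ℕ} {F : Fin n → Type*}
    [∀ i, Fintype (F i)] [∀ i, DecidableEq (F i)]
    (p : (∀ i, F i) → ℝ) (hp : ∀ y, 0 ≤ p y) (hsum : ∑ y, p y = 1)
    (q : ℝ) (hq : 1 ≤ q) :
    tsallisPMF q p
      ≤ ∑ i, tsallisPMF q (fun x : F i => ∑ y : (∀ j, F j), if y i = x then p y else 0) := by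
  change tsallisPMF q p ≤ ∑ i, tsallisPMF q (pushforward (fun y => y i) p)
  induction n with
  | zero => simp [tsallisPMF_eq_zero_of_unique hsum]
  | succ n ih =>
    set P := p ∘ Fin.consEquiv F
    have hP : ∀ z, 0 ≤ P z := fun z => hp _
    have hPsum : ∑ z, P z = 1 := by rw [← hsum]; exact (Fin.consEquiv F).sum_comp p
    calc tsallisPMF q p = tsallisPMF q P := (tsallisPMF_comp_equiv _ p).symm
      _ ≤ tsallisPMF q (pushforward Prod.fst P) + tsallisPMF q (pushforward Prod.snd P) :=
          tsallisPMF_le_add_pushforward_fst_snd hP hPsum hq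
      _ ≤ tsallisPMF q (pushforward Prod.fst P)
            + ∑ i : Fin n, tsallisPMF q (pushforward (· i) (pushforward Prod.snd P)) := by
          gcongr
          exact ih _ (pushforward_nonneg hP _) (by rw [sum_pushforward, hPsum])
      _ = ∑ i, tsallisPMF q (pushforward (fun y => y i) p) := by
          simp only [Fin.sum_univ_succ, pushforward_fst_comp_consEquiv,
            pushforward_snd_comp_consEquiv, P]
end

section
/- For q ≥ 1 and finite-valued random variables X, Y, conditioning reduces Tsallis entropy: Hᵀ_q(X | Y) ≤ Hᵀ_q(X), where Hᵀ_q(X|Y) = ∑_y P(Y=y)ᑫ · Hᵀ_q(X | Y=y). -/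
/-- Conditioning reduces Tsallis entropy for `q ≥ 1`:
`Hᵀ_q(X|Y) = ∑_y P(Y=y)^q · Hᵀ_q(X|Y=y) ≤ Hᵀ_q(X)`. -/
theorem tsallis_condEntropy_le {A B : Type*} [Fintype A] [Fintype B]
    (p : A × B → ℝ) (hp : ∀ z, 0 ≤ p z) (hsum : ∑ z, p z = 1)
    (q : ℝ) (hq : 1 ≤ q) :
    ∑ b, (∑ a, p (a, b)) ^ q * tsallisPMF q (fun a => p (a, b) / ∑ a', p (a', b))
      ≤ tsallisPMF q (fun a => ∑ b, p (a, b)) := by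
  set Q : B → ℝ := fun b => ∑ a, p (a, b) with hQdef
  have hQ : ∀ b, ∑ a, p (a, b) = Q b := fun b => rfl
  have hQ0 : ∀ b, 0 ≤ Q b := fun b => Finset.sum_nonneg fun a _ => hp _
  have hQsum : ∑ b, Q b = 1 := by
    rw [← hsum, Fintype.sum_prod_type]
    exact Finset.sum_comm.symm
  have hQ1 : ∀ b, Q b ≤ 1 := by
    intro b
    rw [← hQsum]
    exact Finset.single_le_sum (fun b _ => hQ0 b) (Finset.mem_univ b)
  have hple : ∀ a b, p (a, b) ≤ Q b :=
    fun a b => Finset.single_le_sum (fun a _ => hp (a, b)) (Finset.mem_univ a)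
  have key : ∀ a b, Q b * (p (a, b) / Q b) = p (a, b) := by
    intro a b
    rcases eq_or_lt_of_le (hQ0 b) with h | h
    · have h0 : p (a, b) = 0 := le_antisymm (h ▸ hple a b) (hp _)
      simp [← h, h0]
    · field_simp
  have hr0 : ∀ a b, 0 ≤ p (a, b) / Q b := fun a b => div_nonneg (hp _) (hQ0 b)
  have hr1 : ∀ a b, p (a, b) / Q b ≤ 1 := by
    intro a b
    rcases eq_or_lt_of_le (hQ0 b) with h | h
    · simp [← h]
    · rw [div_le_one h]; exact hple a b
  have hmix : ∀ a, ∑ b, Q b * (p (a, b) / Q b) = ∑ b, p (a, b) :=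
    fun a => Finset.sum_congr rfl fun b _ => key a b
  simp only [hQ]
  rcases eq_or_ne q 1 with hq1 | hq1
  · subst hq1
    simp only [tsallisPMF, if_pos rfl, Real.rpow_one]
    have jensen : ∀ a, ∑ b, Q b * Real.negMulLog (p (a, b) / Q b)
        ≤ Real.negMulLog (∑ b, p (a, b)) := by
      intro a
      have h := Real.concaveOn_negMulLog.le_map_sum (t := Finset.univ) (w := Q)
        (p := fun b => p (a, b) / Q b) (fun b _ => hQ0 b) hQsum
        (fun b _ => hr0 a b)
      simpa [hmix a] using h
    calc ∑ b, Q b * (-∑ a, p (a, b) / Q b * Real.log (p (a, b) / Q b))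
        = ∑ b, ∑ a, Q b * Real.negMulLog (p (a, b) / Q b) := by
          refine Finset.sum_congr rfl fun b _ => ?_
          rw [mul_neg, Finset.mul_sum, ← Finset.sum_neg_distrib]
          exact Finset.sum_congr rfl fun a _ => by simp [Real.negMulLog]
      _ = ∑ a, ∑ b, Q b * Real.negMulLog (p (a, b) / Q b) := Finset.sum_comm
      _ ≤ ∑ a, Real.negMulLog (∑ b, p (a, b)) := Finset.sum_le_sum fun a _ => jensen a
      _ = -∑ a, (∑ b, p (a, b)) * Real.log (∑ b, p (a, b)) := by
          simp [Real.negMulLog]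
  · have hq' : 1 < q := lt_of_le_of_ne hq (Ne.symm hq1)
    have hqpos : (0 : ℝ) < q := lt_trans one_pos hq'
    simp only [tsallisPMF, if_neg hq1]
    set T : B → ℝ := fun b => ∑ a, (p (a, b) / Q b) ^ q with hTdef
    have hT : ∀ b, ∑ a, (p (a, b) / Q b) ^ q = T b := fun b => rfl
    simp only [hT]
    have hprod : ∀ a b, Q b ^ q * (p (a, b) / Q b) ^ q = p (a, b) ^ q := by
      intro a b
      rw [← Real.mul_rpow (hQ0 b) (hr0 a b), key]
    have hxq : ∀ x : ℝ, 0 ≤ x → x ≤ 1 → x ^ q ≤ x := by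
      intro x hx0 hx1
      rcases eq_or_lt_of_le hx0 with h | h
      · rw [← h, Real.zero_rpow (ne_of_gt hqpos)]
      · calc x ^ q ≤ x ^ (1 : ℝ) := Real.rpow_le_rpow_of_exponent_ge h hx1 hq
          _ = x := Real.rpow_one x
    have hT0 : ∀ b, 0 ≤ T b :=
      fun b => Finset.sum_nonneg fun a _ => Real.rpow_nonneg (hr0 a b) q
    have hT1 : ∀ b, T b ≤ 1 := by
      intro b
      have h1 : T b ≤ ∑ a, p (a, b) / Q b :=
        Finset.sum_le_sum fun a _ => hxq _ (hr0 a b) (hr1 a b)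
      have h2 : ∑ a, p (a, b) / Q b = Q b / Q b := by
        rw [← Finset.sum_div]
      rcases eq_or_lt_of_le (hQ0 b) with h | h
      · refine le_trans h1 ?_
        rw [h2, ← h]; norm_num
      · refine le_trans h1 ?_
        rw [h2, div_self (ne_of_gt h)]
    have hQq : ∀ b, Q b ^ q ≤ Q b := fun b => hxq _ (hQ0 b) (hQ1 b)
    have hQq0 : ∀ b, 0 ≤ Q b ^ q := fun b => Real.rpow_nonneg (hQ0 b) q
    have hLHS : ∑ b, Q b ^ q * ((T b - 1) / (1 - q))
        = ((∑ b, ∑ a, p (a, b) ^ q) - ∑ b, Q b ^ q) / (1 - q) := by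
      calc ∑ b, Q b ^ q * ((T b - 1) / (1 - q))
          = ∑ b, ((∑ a, p (a, b) ^ q) - Q b ^ q) / (1 - q) := by
            refine Finset.sum_congr rfl fun b _ => ?_
            rw [← mul_div_assoc]
            congr 1
            rw [mul_sub, mul_one, Finset.mul_sum]
            congr 1
            exact Finset.sum_congr rfl fun a _ => hprod a b
        _ = ((∑ b, ∑ a, p (a, b) ^ q) - ∑ b, Q b ^ q) / (1 - q) := by
            rw [← Finset.sum_div, Finset.sum_sub_distrib]
    rw [hLHS]
    refine div_le_div_of_nonpos_of_le (by linarith) ?_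
    -- need : ∑ a, (∑ b, p (a, b)) ^ q - 1 ≤ (∑ b, ∑ a, p (a, b) ^ q) - ∑ b, Q b ^ q
    have jensen : ∀ a, (∑ b, p (a, b)) ^ q ≤ ∑ b, Q b * (p (a, b) / Q b) ^ q := by
      intro a
      have h := (convexOn_rpow hq).map_sum_le (t := Finset.univ) (w := Q)
        (p := fun b => p (a, b) / Q b) (fun b _ => hQ0 b) hQsum
        (fun b _ => hr0 a b)
      simpa [hmix a] using h
    have step1 : ∑ a, (∑ b, p (a, b)) ^ q ≤ ∑ b, Q b * T b := by
      calc ∑ a, (∑ b, p (a, b)) ^ q ≤ ∑ a, ∑ b, Q b * (p (a, b) / Q b) ^ q :=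
            Finset.sum_le_sum fun a _ => jensen a
        _ = ∑ b, ∑ a, Q b * (p (a, b) / Q b) ^ q := Finset.sum_comm
        _ = ∑ b, Q b * T b := by
            refine Finset.sum_congr rfl fun b _ => ?_
            rw [← Finset.mul_sum, hT]
    have step2 : ∀ b, Q b * T b ≤ Q b - Q b ^ q + Q b ^ q * T b := by
      intro b
      nlinarith [mul_nonneg (sub_nonneg.mpr (hT1 b)) (sub_nonneg.mpr (hQq b))]
    have step3 : ∑ b, (Q b - Q b ^ q + Q b ^ q * T b)
        = 1 - (∑ b, Q b ^ q) + ∑ b, ∑ a, p (a, b) ^ q := by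
      rw [Finset.sum_add_distrib, Finset.sum_sub_distrib, hQsum]
      congr 1
      refine Finset.sum_congr rfl fun b _ => ?_
      rw [← hT, Finset.mul_sum]
      exact Finset.sum_congr rfl fun a _ => hprod a b
    have step4 : ∑ b, Q b * T b ≤ 1 - (∑ b, Q b ^ q) + ∑ b, ∑ a, p (a, b) ^ q := by
      rw [← step3]
      exact Finset.sum_le_sum fun b _ => step2 b
    linarith
end
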